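/- arXiv:1706.00629 — 6 statements merged into one kernel-verified Lean document; each statement's English description precedes it below -/
import Mathlib

section
/- Under the same hypotheses, for every G ∈ Sym(2) the minimum value satisfies: min over D ∈ Sym(2) of ∫_{-1/2}^{1/2} Q(D + tG - b(t)) dt = (1/12) Q(G - 12∫ t b(t) dt) + ∫ Q(b(t)) dt − Q(∫ b(t) dt) − 12 Q(∫ t b(t) dt), where all integrals are over (-1/2, 1/2). -/
/-!
Expanding `Q (D + t • G - b t)` and integrating over `(-1/2, 1/2)`, where `∫ t = 0` and
`∫ t² = 1/12`, gives `Q D + Q G / 12 + ∫ Q (b t) - polar Q D M0 - polar Q G M1`: the mixed terms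
are linear in `b`, so their integrals are read off from the entrywise moments `M0`, `M1`.
Completing the square turns this into `Q (D - M0)` plus the claimed value, so the minimum is
attained at the symmetric matrix `D = M0` because `Q ≥ 0`.
-/

open MeasureTheory Matrix QuadraticMap Set

namespace Matrix

variable {m n : Type*} [Fintype m] [Fintype n] [DecidableEq m] [DecidableEq n]

theorem linearMap_apply_eq_sum_single {R M : Type*} [CommSemiring R] [AddCommMonoid M]
    [Module R M] (L : Matrix m n R →ₗ[R] M) (A : Matrix m n R) :
    L A = ∑ i, ∑ j, A i j • L (single i j 1) := by
  conv_lhs => rw [matrix_eq_sum_single A]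
  simp only [map_sum, ← L.map_smul, smul_single, smul_eq_mul, mul_one]

theorem two_mul_quadraticMap_apply_eq_sum {R : Type*} [CommRing R]
    (Q : QuadraticMap R (Matrix m n R) R) (A : Matrix m n R) :
    2 * Q A = ∑ i, ∑ j, ∑ k, ∑ l, A i j * A k l * polar Q (single i j 1) (single k l 1) := by
  calc 2 * Q A = polarBilin Q A A := by
        rw [polarBilin_apply_apply, polar_self, nsmul_eq_mul, Nat.cast_ofNat]
    _ = ∑ i, ∑ j, A i j * ∑ k, ∑ l, A k l * polar Q (single i j 1) (single k l 1) := by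
        rw [linearMap_apply_eq_sum_single]
        refine Finset.sum_congr rfl fun i _ => Finset.sum_congr rfl fun j _ => ?_
        rw [smul_eq_mul, polarBilin_apply_apply, polar_comm, ← polarBilin_apply_apply,
          linearMap_apply_eq_sum_single]
        simp only [polarBilin_apply_apply, smul_eq_mul]
    _ = _ := by simp only [Finset.mul_sum, mul_assoc]

variable {α : Type*} [MeasurableSpace α] {μ : Measure α} {f : α → Matrix m n ℝ}

theorem integrable_linearMap_comp (L : Matrix m n ℝ →ₗ[ℝ] ℝ)
    (hf : ∀ i j, Integrable (fun t => f t i j) μ) : Integrable (fun t => L (f t)) μ := by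
  simp_rw [fun t => linearMap_apply_eq_sum_single L (f t), smul_eq_mul]
  exact integrable_finsetSum _ fun i _ => integrable_finsetSum _ fun j _ =>
    (hf i j).mul_const _

theorem integral_linearMap_comp (L : Matrix m n ℝ →ₗ[ℝ] ℝ) {M : Matrix m n ℝ}
    (hf : ∀ i j, Integrable (fun t => f t i j) μ) (hM : ∀ i j, M i j = ∫ t, f t i j ∂μ) :
    ∫ t, L (f t) ∂μ = L M := by
  simp_rw [fun t => linearMap_apply_eq_sum_single L (f t), linearMap_apply_eq_sum_single L M,
    smul_eq_mul, hM]
  rw [integral_finsetSum _ fun i _ => integrable_finsetSum _ fun j _ =>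
    (hf i j).mul_const _]
  refine Finset.sum_congr rfl fun i _ => ?_
  rw [integral_finsetSum _ fun j _ => (hf i j).mul_const _]
  simp only [integral_mul_const]

theorem integrable_quadraticMap_comp (Q : QuadraticMap ℝ (Matrix m n ℝ) ℝ)
    (hf : ∀ i j k l, Integrable (fun t => f t i j * f t k l) μ) :
    Integrable (fun t => Q (f t)) μ := by
  refine (integrable_const_mul_iff (isUnit_iff_ne_zero.2 two_ne_zero) _).1 ?_
  simp_rw [two_mul_quadraticMap_apply_eq_sum]
  exact integrable_finsetSum _ fun i _ => integrable_finsetSum _ fun j _ =>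
    integrable_finsetSum _ fun k _ => integrable_finsetSum _ fun l _ =>
    (hf i j k l).mul_const _

end Matrix

namespace QuadraticMap

variable {V : Type*} [AddCommGroup V] [Module ℝ V] (Q : QuadraticMap ℝ V ℝ)

theorem apply_add_smul_sub (D G B : V) (t : ℝ) :
    Q (D + t • G - B)
      = (Q D + t ^ 2 * Q G + t * polar Q D G) + (Q B - polar Q D B - polar Q G (t • B)) := by
  simp only [sub_eq_add_neg, QuadraticMap.map_add Q, QuadraticMap.map_neg, QuadraticMap.map_smul,
    polar_add_left, polar_neg_right, polar_smul_left, polar_smul_right, smul_eq_mul]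
  ring

theorem apply_sub (x y : V) : Q (x - y) = Q x + Q y - polar Q x y := by
  rw [sub_eq_add_neg, QuadraticMap.map_add Q, QuadraticMap.map_neg, polar_neg_right]
  ring

end QuadraticMap

section CenteredUnitInterval

local notation "𝕀" => Ioo (-(1:ℝ)/2) (1/2)

theorem setIntegral_Ioo_neg_half_half_quadratic (a b c : ℝ) :
    ∫ t in 𝕀, a + t ^ 2 * b + t * c = a + b / 12 := by
  rw [← integral_Ioc_eq_integral_Ioo, ← intervalIntegral.integral_of_le (by norm_num),
    intervalIntegral.integral_add, intervalIntegral.integral_add]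
  · norm_num [integral_pow, integral_id, intervalIntegral.integral_mul_const]
    ring
  all_goals exact Continuous.intervalIntegrable (by fun_prop) _ _

theorem setIntegral_Ioo_neg_half_half_quadraticMap_add_smul_sub {m n : Type*} [Fintype m]
    [Fintype n] [DecidableEq m] [DecidableEq n] (Q : QuadraticMap ℝ (Matrix m n ℝ) ℝ)
    {b : ℝ → Matrix m n ℝ} {M₀ M₁ : Matrix m n ℝ}
    (hb : ∀ i j, IntegrableOn (fun t => b t i j) 𝕀)
    (htb : ∀ i j, IntegrableOn (fun t => t * b t i j) 𝕀)
    (hQb : IntegrableOn (fun t => Q (b t)) 𝕀)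
    (hM₀ : ∀ i j, M₀ i j = ∫ t in 𝕀, b t i j)
    (hM₁ : ∀ i j, M₁ i j = ∫ t in 𝕀, t * b t i j) (D G : Matrix m n ℝ) :
    ∫ t in 𝕀, Q (D + t • G - b t)
      = Q (D - M₀) + ((1/12) * Q (G - (12:ℝ) • M₁)
          + (∫ t in 𝕀, Q (b t)) - Q M₀ - 12 * Q M₁) := by
  have hpoly : IntegrableOn (fun t : ℝ => Q D + t ^ 2 * Q G + t * polar Q D G) 𝕀 :=
    (Continuous.integrableOn_Icc (by fun_prop)).mono_set Ioo_subset_Icc_self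
  have hpol₀ : IntegrableOn (fun t => polar Q D (b t)) 𝕀 :=
    integrable_linearMap_comp (polarBilin Q D) hb
  have hpol₁ : IntegrableOn (fun t => polar Q G (t • b t)) 𝕀 :=
    integrable_linearMap_comp (polarBilin Q G) (f := fun t => t • b t) htb
  have hI₀ : ∫ t in 𝕀, polar Q D (b t) = polar Q D M₀ :=
    integral_linearMap_comp (polarBilin Q D) hb hM₀
  have hI₁ : ∫ t in 𝕀, polar Q G (t • b t) = polar Q G M₁ :=
    integral_linearMap_comp (polarBilin Q G) (f := fun t => t • b t) htb hM₁
  have hQb₀ : IntegrableOn (fun t => Q (b t) - polar Q D (b t)) 𝕀 := hQb.sub hpol₀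
  simp_rw [QuadraticMap.apply_add_smul_sub]
  rw [integral_add (g := fun t => Q (b t) - polar Q D (b t) - polar Q G (t • b t)) hpoly
    (hQb₀.sub hpol₁), integral_sub hQb₀ hpol₁, integral_sub hQb hpol₀,
    setIntegral_Ioo_neg_half_half_quadratic, hI₀, hI₁,
    QuadraticMap.apply_sub, QuadraticMap.apply_sub, QuadraticMap.map_smul, polar_smul_right,
    smul_eq_mul, smul_eq_mul]
  ring

end CenteredUnitInterval

theorem stmt1_general
    (Q : QuadraticForm ℝ (Matrix (Fin 2) (Fin 2) ℝ))
    (hpsd : ∀ M, 0 ≤ Q M)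
    (b : ℝ → Matrix (Fin 2) (Fin 2) ℝ)
    (hbsym : ∀ t, (b t)ᵀ = b t)
    (hbmeas : ∀ i j, Measurable fun t => b t i j)
    (hbbdd : ∃ C, ∀ t i j, |b t i j| ≤ C)
    (M0 M1 : Matrix (Fin 2) (Fin 2) ℝ)
    (hM0 : ∀ i j, M0 i j = ∫ t in Set.Ioo (-(1:ℝ)/2) (1/2), b t i j)
    (hM1 : ∀ i j, M1 i j = ∫ t in Set.Ioo (-(1:ℝ)/2) (1/2), t * b t i j) :
    ∀ G : Matrix (Fin 2) (Fin 2) ℝ, Gᵀ = G →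
      IsLeast
        {v : ℝ | ∃ D : Matrix (Fin 2) (Fin 2) ℝ, Dᵀ = D ∧
            v = ∫ t in Set.Ioo (-(1:ℝ)/2) (1/2), Q (D + t • G - b t)}
        ((1/12) * Q (G - (12:ℝ) • M1)
          + (∫ t in Set.Ioo (-(1:ℝ)/2) (1/2), Q (b t))
          - Q M0 - 12 * Q M1) := by
  intro G _
  obtain ⟨C, hC⟩ := hbbdd
  have hbound : ∀ i j, ∀ᵐ t ∂(volume.restrict (Ioo (-(1:ℝ)/2) (1/2))), ‖b t i j‖ ≤ C :=
    fun i j => ae_of_all _ fun t => (Real.norm_eq_abs _).trans_le (hC t i j)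
  have hb : ∀ i j, IntegrableOn (fun t => b t i j) (Ioo (-(1:ℝ)/2) (1/2)) :=
    fun i j => Integrable.of_bound (hbmeas i j).aestronglyMeasurable C (hbound i j)
  have htb : ∀ i j, IntegrableOn (fun t => t * b t i j) (Ioo (-(1:ℝ)/2) (1/2)) :=
    fun i j => Integrable.mul_bdd (f := fun t => t)
      ((continuous_id.integrableOn_Icc).mono_set Ioo_subset_Icc_self)
      (hbmeas i j).aestronglyMeasurable (hbound i j)
  have hQb := integrable_quadraticMap_comp Q fun i j k l =>
    (hb k l).bdd_mul (hbmeas i j).aestronglyMeasurable (hbound i j)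
  have key := setIntegral_Ioo_neg_half_half_quadraticMap_add_smul_sub Q hb htb hQb hM0 hM1
  have hM0sym : M0ᵀ = M0 := by
    ext i j
    rw [transpose_apply, hM0, hM0]
    exact integral_congr_ae (ae_of_all _ fun t => congr_fun (congr_fun (hbsym t) i) j)
  refine ⟨⟨M0, hM0sym, by rw [key, sub_self, map_zero, zero_add]⟩, ?_⟩
  rintro v ⟨D, -, rfl⟩
  rw [key D G]
  linarith [hpsd (D - M0)]

/-- explicit formula for the minimum value of
`D ↦ ∫_{-1/2}^{1/2} Q (D + t•G - b t) dt` over symmetric `D`. -/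
theorem stmt1
    (Q : QuadraticForm ℝ (Matrix (Fin 2) (Fin 2) ℝ))
    (hpsd : ∀ M, 0 ≤ Q M)
    (hpd : ∀ M : Matrix (Fin 2) (Fin 2) ℝ, Mᵀ = M → M ≠ 0 → 0 < Q M)
    (hskew : ∀ M : Matrix (Fin 2) (Fin 2) ℝ, Mᵀ = -M → Q M = 0)
    (b : ℝ → Matrix (Fin 2) (Fin 2) ℝ)
    (hbsym : ∀ t, (b t)ᵀ = b t)
    (hbmeas : ∀ i j, Measurable fun t => b t i j)
    (hbbdd : ∃ C, ∀ t i j, |b t i j| ≤ C)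
    (M0 M1 : Matrix (Fin 2) (Fin 2) ℝ)
    (hM0 : ∀ i j, M0 i j = ∫ t in Set.Ioo (-(1:ℝ)/2) (1/2), b t i j)
    (hM1 : ∀ i j, M1 i j = ∫ t in Set.Ioo (-(1:ℝ)/2) (1/2), t * b t i j) :
    ∀ G : Matrix (Fin 2) (Fin 2) ℝ, Gᵀ = G →
      IsLeast
        {v : ℝ | ∃ D : Matrix (Fin 2) (Fin 2) ℝ, Dᵀ = D ∧
            v = ∫ t in Set.Ioo (-(1:ℝ)/2) (1/2), Q (D + t • G - b t)}
        ((1/12) * Q (G - (12:ℝ) • M1)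
          + (∫ t in Set.Ioo (-(1:ℝ)/2) (1/2), Q (b t))
          - Q M0 - 12 * Q M1) :=
  stmt1_general Q hpsd b hbsym hbmeas hbbdd M0 M1 hM0 hM1
end

section
/- Let Q₃(F) = 2μ|F_sym|² + λ tr(F)² be an isotropic quadratic form on 3×3 matrices with μ > 0 and 2μ + 3λ > 0. Then for every 2×2 matrix F, min over d ∈ ℝ³ of Q₃(F̂ + d ⊗ f₃) equals 2μ(|F_sym|² + β tr(F)²) where β = λ/(2μ + λ). -/
open Matrix

/-- `min_{d ∈ ℝ³} Q₃(F̂ + d ⊗ f₃) = 2μ(|F_sym|² + β tr²F)` with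
`β = λ/(2μ+λ)`, for `Q₃(F) = 2μ|F_sym|² + λ tr²F`, `μ > 0`, `2μ + 3λ > 0`. -/
theorem stmt2 (μ lam : ℝ) (hμ : 0 < μ) (h2 : 0 < 2 * μ + 3 * lam)
    (Q3 : Matrix (Fin 3) (Fin 3) ℝ → ℝ)
    (hQ3 : ∀ F : Matrix (Fin 3) (Fin 3) ℝ,
      Q3 F = 2 * μ * (∑ i, ∑ j, (((1:ℝ)/2) • (F + Fᵀ)) i j ^ 2) + lam * (Matrix.trace F) ^ 2)
    (F : Matrix (Fin 2) (Fin 2) ℝ)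
    (hatF : Matrix (Fin 3) (Fin 3) ℝ)
    (hhat : ∀ i j : Fin 3, hatF i j =
      if hi : (i : ℕ) < 2 then (if hj : (j : ℕ) < 2 then F ⟨i, hi⟩ ⟨j, hj⟩ else 0) else 0) :
    IsLeast
      {v : ℝ | ∃ d : Fin 3 → ℝ,
        v = Q3 (hatF + Matrix.of fun i j => if j = 2 then d i else 0)}
      (2 * μ * ((∑ i, ∑ j, (((1:ℝ)/2) • (F + Fᵀ)) i j ^ 2)
        + (lam / (2 * μ + lam)) * (Matrix.trace F) ^ 2)) := by
  have hml : 0 < 2 * μ + lam := by linarith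
  set S : ℝ := ∑ i, ∑ j, (((1:ℝ)/2) • (F + Fᵀ)) i j ^ 2 with hS
  set t : ℝ := Matrix.trace F with ht
  have key : ∀ d : Fin 3 → ℝ,
      Q3 (hatF + Matrix.of fun i j => if j = 2 then d i else 0)
        = 2 * μ * S + μ * ((d 0)^2 + (d 1)^2) + 2 * μ * (d 2)^2 + lam * (t + d 2)^2 := by
    intro d
    rw [hQ3]
    simp only [hS, ht, Matrix.trace, Matrix.diag, Fin.sum_univ_three, Fin.sum_univ_two,
      Matrix.smul_apply, Matrix.add_apply, Matrix.transpose_apply, Matrix.of_apply,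
      hhat, smul_eq_mul]
    norm_num [Fin.ext_iff]
    ring
  constructor
  · refine ⟨fun i => if i = 2 then -(lam * t) / (2 * μ + lam) else 0, ?_⟩
    rw [key]
    norm_num [Fin.ext_iff]
    field_simp
    ring
  · rintro v ⟨d, rfl⟩
    rw [key]
    have h1 : 0 ≤ (2 * μ + lam) * (d 2 + lam * t / (2 * μ + lam))^2 := by positivity
    have h2' : (2 * μ + lam) * (d 2 + lam * t / (2 * μ + lam))^2
        = 2 * μ * (d 2)^2 + lam * (t + d 2)^2 - 2 * μ * (lam / (2 * μ + lam)) * t^2 := by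
      field_simp
      ring
    nlinarith [sq_nonneg (d 0), sq_nonneg (d 1), hμ.le]
end

section
/- Let Q₂(F) = |F_sym|² + β tr²(F) with β > -1/2, let a ∈ ℝ, and let Ā = a·I₂. Then the set of minimizers of F ↦ Q₂(F − Ā) over the set 𝓕 = {F ∈ Sym(2) : det F = 0} equals { 𝔯 n ⊗ n : n ∈ ℝ², |n| = 1 } where 𝔯 = a(1+2β)/(1+β). Equivalently, it equals { ρᵀ diag(𝔯, 0) ρ : ρ ∈ SO(2) }. -/
/-!
For symmetric `F` with `det F = 0` one has `|F|² = (tr F)²`, so on `𝓕` the energy `Q₂(F − a I)`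
depends only on `t = tr F` and equals `(1 + β)(t − 𝔯)² + const`; as `1 + β > 0`, the minimizers
are the matrices of `𝓕` with trace `𝔯`. Such a matrix is `𝔯 n ⊗ n` with `n` its normalized
first column, and `ρᵀ diag(𝔯, 0) ρ = 𝔯 n ⊗ n` where `n` is the first row of `ρ`.
-/

open Matrix

namespace Matrix

lemma sum_sq_entries_eq_trace_sq_sub_two_det {R : Type*} [CommRing R]
    {F : Matrix (Fin 2) (Fin 2) R} (hF : Fᵀ = F) :
    ∑ i, ∑ j, F i j ^ 2 = F.trace ^ 2 - 2 * F.det := by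
  have h10 : F 1 0 = F 0 1 := congrFun₂ hF 0 1
  simp only [Fin.sum_univ_two, trace_fin_two, det_fin_two, h10]
  ring

lemma transpose_mul_diag_mul {R : Type*} [CommRing R] (ρ : Matrix (Fin 2) (Fin 2) R) (r : R) :
    ρᵀ * !![r, 0; 0, 0] * ρ = r • vecMulVec (ρ 0) (ρ 0) := by
  ext i j
  fin_cases i <;> fin_cases j <;> simp [mul_apply, Fin.sum_univ_two, vecMulVec_apply] <;> ring

end Matrix

noncomputable def Q₂ (β : ℝ) (F : Matrix (Fin 2) (Fin 2) ℝ) : ℝ :=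
  (∑ i, ∑ j, (((1 : ℝ) / 2) • (F + Fᵀ)) i j ^ 2) + β * F.trace ^ 2

lemma Q₂_of_transpose_eq {β : ℝ} {G : Matrix (Fin 2) (Fin 2) ℝ} (hG : Gᵀ = G) :
    Q₂ β G = (1 + β) * G.trace ^ 2 - 2 * G.det := by
  have hhalf : ((1 : ℝ) / 2) • (G + Gᵀ) = G := by
    rw [hG, ← two_smul ℝ, smul_smul]; norm_num
  rw [Q₂, hhalf, sum_sq_entries_eq_trace_sq_sub_two_det hG]
  ring

lemma Q₂_sub_smul_one {β a : ℝ} {F : Matrix (Fin 2) (Fin 2) ℝ} (hF : Fᵀ = F) (hdet : F.det = 0) :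
    Q₂ β (F - a • 1) =
      (1 + β) * F.trace ^ 2 - 2 * a * (1 + 2 * β) * F.trace + 2 * (1 + 2 * β) * a ^ 2 := by
  have hsymm : (F - a • 1)ᵀ = F - a • 1 := by simp [hF]
  have htrace : (F - a • 1).trace = F.trace - 2 * a := by
    simp [trace_sub, trace_smul]; ring
  have hdet' : (F - a • 1).det = a ^ 2 - a * F.trace := by
    rw [det_fin_two] at hdet
    simp [det_fin_two, trace_fin_two]
    linear_combination hdet
  rw [Q₂_of_transpose_eq hsymm, htrace, hdet']
  ring

lemma exists_unit_of_mul_eq_sq {p q s r : ℝ} (hdet : p * q = s ^ 2) (htr : p + q = r) :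
    ∃ u v : ℝ, u ^ 2 + v ^ 2 = 1 ∧ p = r * u ^ 2 ∧ s = r * (u * v) ∧ q = r * v ^ 2 := by
  rcases eq_or_ne p 0 with rfl | hp
  · have hs : s = 0 := pow_eq_zero_iff two_ne_zero |>.mp (by linear_combination -hdet)
    exact ⟨0, 1, by ring, by ring, by rw [hs]; ring, by linear_combination htr⟩
  · have hpr : p * r = p ^ 2 + s ^ 2 := by linear_combination -p * htr + hdet
    have hpos : 0 < p * r := hpr ▸ by positivity
    have hr : r ≠ 0 := by rintro rfl; simp at hpos
    -- `(u, v)` is the first column `(p, s)` of the matrix, normalized.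
    set d := √(p * r)
    have hd : d ^ 2 = p * r := Real.sq_sqrt hpos.le
    have hd0 : d ≠ 0 := (Real.sqrt_pos.mpr hpos).ne'
    refine ⟨p / d, s / d, ?_, ?_, ?_, ?_⟩ <;> field_simp <;> rw [hd]
    · linear_combination -hpr
    · ring
    · linear_combination r * hdet

lemma symm_det_eq_zero_trace_eq_iff {r : ℝ} {M : Matrix (Fin 2) (Fin 2) ℝ} :
    (Mᵀ = M ∧ M.det = 0 ∧ M.trace = r) ↔
      ∃ n : Fin 2 → ℝ, n 0 ^ 2 + n 1 ^ 2 = 1 ∧ M = r • vecMulVec n n := by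
  constructor
  · rintro ⟨hM, hdet, htr⟩
    have h10 : M 1 0 = M 0 1 := congrFun₂ hM 0 1
    obtain ⟨u, v, huv, h00, h01, h11⟩ := exists_unit_of_mul_eq_sq (s := M 0 1)
      (by rw [det_fin_two, h10] at hdet; linear_combination hdet) (trace_fin_two M ▸ htr)
    refine ⟨![u, v], by simpa using huv, ?_⟩
    ext i j
    fin_cases i <;> fin_cases j <;> simp [h00, h01, h10, h11, sq, mul_comm u v]
  · rintro ⟨n, hn, rfl⟩
    refine ⟨by rw [transpose_smul, transpose_vecMulVec], ?_, ?_⟩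
    · simp only [det_fin_two, Matrix.smul_apply, vecMulVec_apply, smul_eq_mul]; ring
    · simp [trace_vecMulVec, dotProduct, ← sq, hn]

lemma exists_unit_smul_vecMulVec_iff {r : ℝ} {M : Matrix (Fin 2) (Fin 2) ℝ} :
    (∃ n : Fin 2 → ℝ, n 0 ^ 2 + n 1 ^ 2 = 1 ∧ M = r • vecMulVec n n) ↔
      ∃ ρ : Matrix (Fin 2) (Fin 2) ℝ, ρᵀ * ρ = 1 ∧ ρ.det = 1 ∧ M = ρᵀ * !![r, 0; 0, 0] * ρ := by
  constructor
  · rintro ⟨n, hn, rfl⟩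
    refine ⟨!![n 0, n 1; -n 1, n 0], ?_, ?_, ?_⟩
    · ext i j
      fin_cases i <;> fin_cases j <;> simp [mul_apply] <;> grind
    · simp [det_fin_two]; linear_combination hn
    · rw [transpose_mul_diag_mul]
      congr 2 <;> ext i <;> fin_cases i <;> rfl
  · rintro ⟨ρ, hρ, -, rfl⟩
    have hρ' : ρ * ρᵀ = 1 := mul_eq_one_comm.mp hρ
    have hrow : ρ 0 0 ^ 2 + ρ 0 1 ^ 2 = 1 := by
      simpa [mul_apply, sq] using congrFun₂ hρ' 0 0
    exact ⟨ρ 0, hrow, transpose_mul_diag_mul ρ r⟩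

lemma minimizers_Q₂_sub_smul_one {β a r : ℝ} (hβ : 0 < 1 + β)
    (hr : r = a * (1 + 2 * β) / (1 + β)) :
    {F ∈ {F : Matrix (Fin 2) (Fin 2) ℝ | Fᵀ = F ∧ F.det = 0} |
        ∀ F' ∈ {F : Matrix (Fin 2) (Fin 2) ℝ | Fᵀ = F ∧ F.det = 0},
          Q₂ β (F - a • 1) ≤ Q₂ β (F' - a • 1)} =
      {F | Fᵀ = F ∧ F.det = 0 ∧ F.trace = r} := by
  obtain ⟨c, hQ⟩ : ∃ c : ℝ, ∀ F : Matrix (Fin 2) (Fin 2) ℝ, Fᵀ = F → F.det = 0 →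
      Q₂ β (F - a • 1) = (1 + β) * (F.trace - r) ^ 2 + c :=
    ⟨2 * (1 + 2 * β) * a ^ 2 - (1 + β) * r ^ 2, fun F hF hdet => by
      rw [Q₂_sub_smul_one hF hdet, hr]; field_simp; ring⟩
  have hD : (!![r, 0; 0, 0] : Matrix (Fin 2) (Fin 2) ℝ)ᵀ = !![r, 0; 0, 0] ∧
      (!![r, 0; 0, 0] : Matrix (Fin 2) (Fin 2) ℝ).det = 0 ∧
      (!![r, 0; 0, 0] : Matrix (Fin 2) (Fin 2) ℝ).trace = r := by
    simp [det_fin_two, trace_fin_two, ← Matrix.ext_iff, Fin.forall_fin_two]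
  ext F
  simp only [Set.mem_ofPred_eq, and_imp]
  constructor
  · rintro ⟨⟨hF, hdet⟩, hmin⟩
    have hle := hmin _ hD.1 hD.2.1
    rw [hQ F hF hdet, hQ _ hD.1 hD.2.1, hD.2.2] at hle
    have hsq : (F.trace - r) ^ 2 = 0 := by nlinarith [sq_nonneg (F.trace - r)]
    exact ⟨hF, hdet, sub_eq_zero.mp (pow_eq_zero_iff two_ne_zero |>.mp hsq)⟩
  · rintro ⟨hF, hdet, htr⟩
    refine ⟨⟨hF, hdet⟩, fun F' hF' hdet' => ?_⟩
    rw [hQ F hF hdet, hQ F' hF' hdet', htr]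
    nlinarith [sq_nonneg (F'.trace - r)]

/-- for `Ā = a·I₂`, the minimizers of `F ↦ Q₂(F − Ā)` over
`𝓕 = {F ∈ Sym(2) : det F = 0}` are exactly `{𝔯 n⊗n : |n| = 1}` with
`𝔯 = a(1+2β)/(1+β)`, equivalently `{ρᵀ diag(𝔯,0) ρ : ρ ∈ SO(2)}`. -/
theorem stmt4 (β a : ℝ) (hβ : -(1/2) < β)
    (Q2 : Matrix (Fin 2) (Fin 2) ℝ → ℝ)
    (hQ2 : ∀ F : Matrix (Fin 2) (Fin 2) ℝ,
      Q2 F = (∑ i, ∑ j, (((1:ℝ)/2) • (F + Fᵀ)) i j ^ 2) + β * (Matrix.trace F) ^ 2)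
    (𝓕 : Set (Matrix (Fin 2) (Fin 2) ℝ))
    (h𝓕 : 𝓕 = {F | Fᵀ = F ∧ F.det = 0})
    (Abar : Matrix (Fin 2) (Fin 2) ℝ) (hA : Abar = a • (1 : Matrix (Fin 2) (Fin 2) ℝ))
    (r : ℝ) (hr : r = a * (1 + 2 * β) / (1 + β)) :
    ({F ∈ 𝓕 | ∀ F' ∈ 𝓕, Q2 (F - Abar) ≤ Q2 (F' - Abar)} =
      {M | ∃ n : Fin 2 → ℝ, (n 0) ^ 2 + (n 1) ^ 2 = 1 ∧ M = r • Matrix.vecMulVec n n}) ∧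
    ({F ∈ 𝓕 | ∀ F' ∈ 𝓕, Q2 (F - Abar) ≤ Q2 (F' - Abar)} =
      {M | ∃ ρ : Matrix (Fin 2) (Fin 2) ℝ, ρᵀ * ρ = 1 ∧ ρ.det = 1 ∧
        M = ρᵀ * !![r, 0; 0, 0] * ρ}) := by
  obtain rfl : Q2 = Q₂ β := funext hQ2
  subst h𝓕 hA
  rw [minimizers_Q₂_sub_smul_one (by linarith) hr]
  have hunit := Set.ext fun M => symm_det_eq_zero_trace_eq_iff (r := r) (M := M)
  exact ⟨hunit, hunit.trans (Set.ext fun M => exists_unit_smul_vecMulVec_iff)⟩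
end

section
/- Let Q₂(F) = |F_sym|² + β tr²(F) with β > -1/2, a ∈ ℝ \ {0}, and Ā = diag(a, −a). Then the set of minimizers of F ↦ Q₂(F − Ā) over 𝓕 = {F ∈ Sym(2) : det F = 0} equals { diag(𝔯, 0), diag(0, −𝔯) } with 𝔯 = a/(1+β). -/
open Matrix

private lemma aux_min (β a x y z : ℝ) (hβ : -(1/2) < β) (hdet : x*y - z*z = 0) :
    a^2*(1+2*β)/(1+β) ≤ (x-a)^2 + z^2 + z^2 + (y+a)^2 + β*(x+y)^2 := by
  have hb1 : (0:ℝ) < 1+β := by linarith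
  have hxy : x*y = z*z := by linarith
  rw [div_le_iff₀ hb1]
  nlinarith [sq_nonneg ((1+β)*(x-y)-a), sq_nonneg ((1+β)*z), mul_pos hb1 hb1, hxy]

/-- for `Ā = diag(a, −a)` with `a ≠ 0`, the minimizers of
`F ↦ Q₂(F − Ā)` over `𝓕 = {F ∈ Sym(2) : det F = 0}` are exactly
`{diag(𝔯,0), diag(0,−𝔯)}` with `𝔯 = a/(1+β)`. -/
theorem stmt5 (β a : ℝ) (hβ : -(1/2) < β) (ha : a ≠ 0)
    (Q2 : Matrix (Fin 2) (Fin 2) ℝ → ℝ)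
    (hQ2 : ∀ F : Matrix (Fin 2) (Fin 2) ℝ,
      Q2 F = (∑ i, ∑ j, (((1:ℝ)/2) • (F + Fᵀ)) i j ^ 2) + β * (Matrix.trace F) ^ 2)
    (𝓕 : Set (Matrix (Fin 2) (Fin 2) ℝ))
    (h𝓕 : 𝓕 = {F | Fᵀ = F ∧ F.det = 0})
    (Abar : Matrix (Fin 2) (Fin 2) ℝ) (hA : Abar = !![a, 0; 0, -a])
    (r : ℝ) (hr : r = a / (1 + β)) :
    {F ∈ 𝓕 | ∀ F' ∈ 𝓕, Q2 (F - Abar) ≤ Q2 (F' - Abar)} =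
      {!![r, 0; 0, 0], !![0, 0; 0, -r]} := by
  have hb1 : (0:ℝ) < 1 + β := by linarith
  subst h𝓕 hA
  -- value of Q2 at symmetric F
  have hval : ∀ F : Matrix (Fin 2) (Fin 2) ℝ, Fᵀ = F →
      Q2 (F - !![a, 0; 0, -a]) =
        (F 0 0 - a)^2 + (F 0 1)^2 + (F 0 1)^2 + (F 1 1 + a)^2
          + β*(F 0 0 + F 1 1)^2 := by
    intro F hF
    have h01 := congrFun (congrFun hF 1) 0
    simp only [Matrix.transpose_apply] at h01
    rw [hQ2]
    simp [Fin.sum_univ_two, Matrix.trace_fin_two, Matrix.sub_apply,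
      Matrix.add_apply, Matrix.transpose_apply, Matrix.smul_apply, h01,
      Matrix.vecHead, Matrix.vecTail]
    ring
  have hM1sym : (!![r, 0; 0, 0] : Matrix (Fin 2) (Fin 2) ℝ)ᵀ = !![r, 0; 0, 0] := by
    ext i j; fin_cases i <;> fin_cases j <;> simp
  have hM2sym : (!![0, 0; 0, -r] : Matrix (Fin 2) (Fin 2) ℝ)ᵀ = !![0, 0; 0, -r] := by
    ext i j; fin_cases i <;> fin_cases j <;> simp
  have hM1 : (!![r, 0; 0, 0] : Matrix (Fin 2) (Fin 2) ℝ) ∈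
      {F : Matrix (Fin 2) (Fin 2) ℝ | Fᵀ = F ∧ F.det = 0} :=
    ⟨hM1sym, by simp [Matrix.det_fin_two]⟩
  have hM2 : (!![0, 0; 0, -r] : Matrix (Fin 2) (Fin 2) ℝ) ∈
      {F : Matrix (Fin 2) (Fin 2) ℝ | Fᵀ = F ∧ F.det = 0} :=
    ⟨hM2sym, by simp [Matrix.det_fin_two]⟩
  have hM1val : Q2 (!![r, 0; 0, 0] - !![a, 0; 0, -a]) = a^2*(1+2*β)/(1+β) := by
    rw [hval _ hM1sym]
    norm_num
    rw [hr]
    field_simp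
    ring
  have hM2val : Q2 (!![0, 0; 0, -r] - !![a, 0; 0, -a]) = a^2*(1+2*β)/(1+β) := by
    rw [hval _ hM2sym]
    norm_num
    rw [hr]
    field_simp
    ring
  have hbound : ∀ F ∈ {F : Matrix (Fin 2) (Fin 2) ℝ | Fᵀ = F ∧ F.det = 0},
      a^2*(1+2*β)/(1+β) ≤ Q2 (F - !![a, 0; 0, -a]) := by
    rintro F ⟨hFsym, hFdet⟩
    have h01 := congrFun (congrFun hFsym 1) 0
    simp only [Matrix.transpose_apply] at h01
    have hdet : F 0 0 * F 1 1 - F 0 1 * F 0 1 = 0 := by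
      rw [Matrix.det_fin_two, ← h01] at hFdet
      linarith
    rw [hval F hFsym]
    exact aux_min β a (F 0 0) (F 1 1) (F 0 1) hβ hdet
  ext F
  simp only [Set.mem_setOf_eq, Set.mem_insert_iff, Set.mem_singleton_iff]
  constructor
  · rintro ⟨⟨hFsym, hFdet⟩, hmin⟩
    have h01 := congrFun (congrFun hFsym 1) 0
    simp only [Matrix.transpose_apply] at h01
    have h10 := h01.symm
    have hdet : F 0 0 * F 1 1 - F 0 1 * F 0 1 = 0 := by
      rw [Matrix.det_fin_two, ← h01] at hFdet
      linarith
    have hle : Q2 (F - !![a, 0; 0, -a]) ≤ a^2*(1+2*β)/(1+β) := by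
      rw [← hM1val]; exact hmin _ hM1
    rw [hval F hFsym] at hle
    set x := F 0 0 with hxdef
    set y := F 1 1 with hydef
    set z := F 0 1 with hzdef
    rw [le_div_iff₀ hb1] at hle
    have hsq : (0:ℝ) < (1+β)*(1+β) := mul_pos hb1 hb1
    have hz2 : z^2 ≤ 0 := by
      nlinarith [sq_nonneg ((1+β)*(x-y)-a)]
    have hz : z = 0 := by
      have h0 : z^2 = 0 := le_antisymm hz2 (sq_nonneg z)
      exact pow_eq_zero_iff two_ne_zero |>.mp h0
    have hd2 : ((1+β)*(x-y)-a)^2 ≤ 0 := by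
      nlinarith [sq_nonneg z, sq_nonneg ((1+β)*z)]
    have hd : (1+β)*(x-y)-a = 0 := by
      have h0 : ((1+β)*(x-y)-a)^2 = 0 := le_antisymm hd2 (sq_nonneg _)
      exact pow_eq_zero_iff two_ne_zero |>.mp h0
    have hxy : x * y = 0 := by rw [hz] at hdet; linarith
    rcases mul_eq_zero.mp hxy with hx | hy
    · right
      have hy : y = -r := by
        rw [hr]; rw [hx] at hd; field_simp; linarith
      have hF00 : F 0 0 = 0 := hx
      have hF01 : F 0 1 = 0 := hz
      have hF10 : F 1 0 = 0 := h10.trans hz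
      have hF11 : F 1 1 = -r := hy
      ext i j; fin_cases i <;> fin_cases j <;>
        simp [hF00, hF01, hF10, hF11]
    · left
      have hx : x = r := by
        rw [hr]; rw [hy] at hd; field_simp; linarith
      have hF00 : F 0 0 = r := hx
      have hF01 : F 0 1 = 0 := hz
      have hF10 : F 1 0 = 0 := h10.trans hz
      have hF11 : F 1 1 = 0 := hy
      ext i j; fin_cases i <;> fin_cases j <;>
        simp [hF00, hF01, hF10, hF11]
  · rintro (rfl | rfl)
    · exact ⟨hM1, fun F' hF' => by rw [hM1val]; exact hbound F' hF'⟩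
    · exact ⟨hM2, fun F' hF' => by rw [hM2val]; exact hbound F' hF'⟩
end

section
/- For β > -1/2 and a, b ∈ ℝ, the minimization of f(ξ, υ) = (1+β)(ξ+υ)² − 2(a(1+β)+bβ)ξ − 2(b(1+β)+aβ)υ + a² + b² + β(a+b)² over the region P = {(ξ,υ) ∈ ℝ² : ξυ ≥ 0} is attained, and when a ≠ b every minimum point lies on the boundary ∂P = {(ξ,υ) : ξυ = 0}. -/
/-- the quadratic function `f` attains its minimum on
`P = {(ξ,υ) : ξυ ≥ 0}`, and when `a ≠ b` every minimum point of `f` on `P`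
lies on `∂P = {(ξ,υ) : ξυ = 0}`. -/
theorem stmt7 (β a b : ℝ) (hβ : -(1/2) < β)
    (f : ℝ × ℝ → ℝ)
    (hf : ∀ p : ℝ × ℝ, f p =
      (1 + β) * (p.1 + p.2) ^ 2 - 2 * (a * (1 + β) + b * β) * p.1
        - 2 * (b * (1 + β) + a * β) * p.2 + a ^ 2 + b ^ 2 + β * (a + b) ^ 2) :
    (∃ p ∈ {q : ℝ × ℝ | 0 ≤ q.1 * q.2},
        ∀ q ∈ {q : ℝ × ℝ | 0 ≤ q.1 * q.2}, f p ≤ f q) ∧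
    (a ≠ b → ∀ p ∈ {q : ℝ × ℝ | 0 ≤ q.1 * q.2},
        (∀ q ∈ {q : ℝ × ℝ | 0 ≤ q.1 * q.2}, f p ≤ f q) → p.1 * p.2 = 0) := by
  have hc : (0:ℝ) < 1 + β := by linarith
  set A := a * (1 + β) + b * β with hA
  set B := b * (1 + β) + a * β with hB
  set R := 2 * (|A| + |B|) / (1 + β) + 1 with hR
  have hRpos : 0 < R := by
    have h0 : 0 ≤ 2 * (|A| + |B|) / (1 + β) := by positivity
    rw [hR]; linarith
  have hRe : (1 + β) * R = 2 * (|A| + |B|) + (1 + β) := by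
    rw [hR]; field_simp
  constructor
  · -- existence of a minimizer
    have hPclosed : IsClosed {q : ℝ × ℝ | 0 ≤ q.1 * q.2} :=
      isClosed_le continuous_const (continuous_fst.mul continuous_snd)
    have hK : IsCompact (Set.Icc ((-R, -R) : ℝ × ℝ) (R, R) ∩ {q : ℝ × ℝ | 0 ≤ q.1 * q.2}) :=
      isCompact_Icc.inter_right hPclosed
    have h00 : ((0, 0) : ℝ × ℝ) ∈ Set.Icc ((-R, -R) : ℝ × ℝ) (R, R) ∩
        {q : ℝ × ℝ | 0 ≤ q.1 * q.2} := by
      refine ⟨?_, by simp⟩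
      simp only [Set.mem_Icc, Prod.le_def]
      refine ⟨⟨by linarith, by linarith⟩, ⟨by linarith, by linarith⟩⟩
    have hfc : Continuous f := by
      have : f = fun p : ℝ × ℝ => (1 + β) * (p.1 + p.2) ^ 2 - 2 * A * p.1
          - 2 * B * p.2 + a ^ 2 + b ^ 2 + β * (a + b) ^ 2 := funext hf
      rw [this]; fun_prop
    obtain ⟨p, hpK, hpmin⟩ := hK.exists_isMinOn ⟨(0, 0), h00⟩ hfc.continuousOn
    have hout : ∀ q : ℝ × ℝ, 0 ≤ q.1 * q.2 →
        q ∉ Set.Icc ((-R, -R) : ℝ × ℝ) (R, R) → f (0, 0) ≤ f q := by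
      intro q hq hqI
      have habs : |q.1| * |q.2| = q.1 * q.2 := by rw [← abs_mul, abs_of_nonneg hq]
      have hRt : R < |q.1| + |q.2| := by
        by_contra hcon
        push_neg at hcon
        have h1 := abs_nonneg q.1
        have h2 := abs_nonneg q.2
        have hx1 := le_abs_self q.1
        have hx2 := neg_abs_le q.1
        have hy1 := le_abs_self q.2
        have hy2 := neg_abs_le q.2
        exact hqI ⟨⟨by simp only []; linarith, by simp only []; linarith⟩,
          ⟨by simp only []; linarith, by simp only []; linarith⟩⟩
      have hAx : A * q.1 ≤ |A| * |q.1| := by rw [← abs_mul]; exact le_abs_self _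
      have hBy : B * q.2 ≤ |B| * |q.2| := by rw [← abs_mul]; exact le_abs_self _
      have hsq : (q.1 + q.2) ^ 2 = (|q.1| + |q.2|) ^ 2 := by
        have h1 : |q.1| ^ 2 = q.1 ^ 2 := sq_abs _
        have h2 : |q.2| ^ 2 = q.2 ^ 2 := sq_abs _
        nlinarith [habs]
      have htpos : 0 < |q.1| + |q.2| := lt_trans hRpos hRt
      rw [hf, hf]
      simp only
      have hAX : |A| * |q.1| ≤ |A| * (|q.1| + |q.2|) :=
        mul_le_mul_of_nonneg_left (le_add_of_nonneg_right (abs_nonneg _)) (abs_nonneg _)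
      have hBY : |B| * |q.2| ≤ |B| * (|q.1| + |q.2|) :=
        mul_le_mul_of_nonneg_left (le_add_of_nonneg_left (abs_nonneg _)) (abs_nonneg _)
      nlinarith [mul_pos hc (mul_pos htpos (sub_pos.mpr hRt)), mul_pos hc htpos]
    refine ⟨p, hpK.2, ?_⟩
    intro q hq
    by_cases hqI : q ∈ Set.Icc ((-R, -R) : ℝ × ℝ) (R, R)
    · exact hpmin ⟨hqI, hq⟩
    · exact le_trans (hpmin h00) (hout q hq hqI)
  · -- boundary property
    intro hab p hp hmin
    by_contra h
    have hxy : 0 < p.1 * p.2 := lt_of_le_of_ne hp (Ne.symm h)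
    have h1 := hmin (p.1 + p.2, 0) (by simp)
    have h2 := hmin (0, p.1 + p.2) (by simp)
    rw [hf p, hf (p.1 + p.2, 0)] at h1
    rw [hf p, hf (0, p.1 + p.2)] at h2
    simp only [hA, hB] at h1 h2
    have hab' : a - b ≠ 0 := sub_ne_zero.mpr hab
    have hab2 : 0 < (a - b) ^ 2 := by positivity
    have k1 : (a - b) * p.2 ≤ 0 := by nlinarith [h1]
    have k2 : 0 ≤ (a - b) * p.1 := by nlinarith [h2]
    have m1 : 0 ≤ ((a - b) * p.1) * (-((a - b) * p.2)) := mul_nonneg k2 (neg_nonneg.mpr k1)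
    have m2 : ((a - b) * p.1) * (-((a - b) * p.2)) = -((a - b) ^ 2 * (p.1 * p.2)) := by ring
    have m3 : 0 < (a - b) ^ 2 * (p.1 * p.2) := mul_pos hab2 hxy
    linarith
end

section
/- Let Q₃ be a quadratic form on ℝ^{3×3} that is positive semidefinite, positive definite on Sym(3), and vanishes on Skew(3). Define Q₂(G) = min_{d ∈ ℝ³} Q₃(Ĝ + d ⊗ f₃) for G ∈ ℝ^{2×2}. Then Q₂ is a quadratic form on ℝ^{2×2}, positive semidefinite, positive definite on Sym(2), vanishing on Skew(2), and Q₃(F) ≥ Q₂(F̌) for every F ∈ ℝ^{3×3}, where F̌ is the upper-left 2×2 submatrix of F. -/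
/-!
A positive semidefinite form has every isotropic vector in the radical of its polar form, so a
form `Q₃` vanishing on skew matrices only sees the symmetric part of its argument, and
`Q₃ X > 0` unless `X` is skew. Hence `d ↦ Q₃ (d ⊗ f₃)` is positive definite, and minimizing
`Q₃ (Ĝ + d ⊗ f₃)` over `d` is a nondegenerate least-squares problem whose minimizer depends
linearly on `G`, which makes `Q₂` a quadratic form. Its remaining properties come from
three observations: `Ĝ + d ⊗ f₃` has upper-left block `G`, so it is not skew when `G` is
symmetric and nonzero; `Ĝ` is skew when `G` is; and for `G = F̌` and a suitable `d`, the matrix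
`F` differs from `Ĝ + d ⊗ f₃` by a skew matrix.
-/

open Matrix

namespace QuadraticMap

variable {M : Type*} [AddCommGroup M] [Module ℝ M]

theorem polar_eq_zero_of_nonneg_of_eq_zero {Q : QuadraticForm ℝ M} (hQ : ∀ x, 0 ≤ Q x) {y : M}
    (hy : Q y = 0) (x : M) : polar Q x y = 0 := by
  have hquad : ∀ t : ℝ, 0 ≤ Q y * (t * t) + polar Q x y * t + Q x := fun t => by
    have h := hQ (x + t • y)
    rw [← sub_add_cancel (Q (x + t • y)) (Q x + Q (t • y)), ← sub_sub, ← polar,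
      polar_smul_right, QuadraticMap.map_smul] at h
    simp only [smul_eq_mul] at h
    linarith
  have hdisc := discrim_le_zero hquad
  rw [hy, discrim] at hdisc
  nlinarith [sq_nonneg (polar Q x y)]

theorem map_add_of_nonneg_of_eq_zero {Q : QuadraticForm ℝ M} (hQ : ∀ x, 0 ≤ Q x) {y : M}
    (hy : Q y = 0) (x : M) : Q (x + y) = Q x := by
  have h := polar_eq_zero_of_nonneg_of_eq_zero hQ hy x
  rw [polar, hy] at h
  linarith

theorem nondegenerate_polarBilin_of_posDef {Q : QuadraticForm ℝ M} (hQ : Q.PosDef) :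
    Q.polarBilin.Nondegenerate := by
  refine (LinearMap.IsRefl.nondegenerate_iff_separatingLeft fun x y h => ?_).mpr fun x hx => ?_
  · rwa [polarBilin_apply_apply, polar_comm, ← polarBilin_apply_apply]
  · have h := hx x
    rw [polarBilin_apply_apply, polar_self, two_nsmul] at h
    exact hQ.anisotropic x (by linarith)

variable {N : Type*} [AddCommGroup N] [Module ℝ N] [FiniteDimensional ℝ N]
  (Q : QuadraticForm ℝ M) (L : N →ₗ[ℝ] M) (hL : (Q.comp L).PosDef)

/-- The `d` minimizing `Q (x + L d)`, characterized by `x + L d` being `Q`-orthogonal to the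
range of `L`. -/
noncomputable def minimizer : M →ₗ[ℝ] N :=
  (LinearMap.BilinForm.toDual _ (nondegenerate_polarBilin_of_posDef hL)).symm.toLinearMap ∘ₗ
    (-Q.polarBilin.compl₂ L)

theorem polar_add_minimizer_eq_zero (x : M) (e : N) :
    polar Q (x + L (minimizer Q L hL x)) (L e) = 0 := by
  have h := LinearMap.BilinForm.apply_toDual_symm_apply
    (hB := nondegenerate_polarBilin_of_posDef hL) ((-Q.polarBilin.compl₂ L) x) e
  have hcomp : ∀ a b, polar (Q.comp L) a b = polar Q (L a) (L b) := fun a b => by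
    simp only [polar, comp_apply, map_add]
  rw [polarBilin_apply_apply, hcomp] at h
  rw [polar_add_left, minimizer, LinearMap.comp_apply, LinearEquiv.coe_coe, h]
  simp

theorem map_add_eq_map_add_minimizer_add (x : M) (d : N) :
    Q (x + L d) = Q (x + L (minimizer Q L hL x)) + Q (L (d - minimizer Q L hL x)) := by
  have h := polar_add_minimizer_eq_zero Q L hL x (d - minimizer Q L hL x)
  rw [polar, map_sub, add_add_sub_cancel] at h
  rw [map_sub]
  linarith

/-- The quadratic form `x ↦ min_d Q (x + L d)` (see `isLeast_minAlong`). -/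
noncomputable def minAlong : QuadraticForm ℝ M :=
  Q.comp (LinearMap.id + L ∘ₗ minimizer Q L hL)

theorem minAlong_apply (x : M) : minAlong Q L hL x = Q (x + L (minimizer Q L hL x)) := rfl

theorem isLeast_minAlong (x : M) :
    IsLeast (Set.range fun d => Q (x + L d)) (minAlong Q L hL x) := by
  refine ⟨⟨minimizer Q L hL x, rfl⟩, ?_⟩
  rintro _ ⟨d, rfl⟩
  dsimp only
  rw [minAlong_apply, map_add_eq_map_add_minimizer_add Q L hL x d]
  exact le_add_of_nonneg_right (hL.nonneg _)

section SkewInvariant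

variable {ι : Type*} {Q : QuadraticForm ℝ (Matrix ι ι ℝ)} (hQ : ∀ X, 0 ≤ Q X)
  (hskew : ∀ X : Matrix ι ι ℝ, Xᵀ = -X → Q X = 0)
include hQ hskew

theorem map_add_of_transpose_eq_neg (X : Matrix ι ι ℝ) {W : Matrix ι ι ℝ}
    (hW : Wᵀ = -W) : Q (X + W) = Q X :=
  map_add_of_nonneg_of_eq_zero hQ (hskew W hW) X

theorem pos_of_transpose_ne_neg
    (hpd : ∀ X : Matrix ι ι ℝ, Xᵀ = X → X ≠ 0 → 0 < Q X) {X : Matrix ι ι ℝ} (hX : Xᵀ ≠ -X) :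
    0 < Q X := by
  set S := (2⁻¹ : ℝ) • (X + Xᵀ)
  have hXS : X = S + (2⁻¹ : ℝ) • (X - Xᵀ) := by module
  have hskewPart : ((2⁻¹ : ℝ) • (X - Xᵀ))ᵀ = -((2⁻¹ : ℝ) • (X - Xᵀ)) := by
    rw [transpose_smul, transpose_sub, transpose_transpose, ← smul_neg, neg_sub]
  have hS : Sᵀ = S := by rw [transpose_smul, transpose_add, transpose_transpose, add_comm]
  have hS0 : S ≠ 0 := fun h => hX <| by
    rw [smul_eq_zero_iff_right (by norm_num), add_eq_zero_iff_eq_neg] at h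
    exact (neg_eq_iff_eq_neg.mpr h).symm
  rw [hXS, map_add_of_transpose_eq_neg hQ hskew S hskewPart]
  exact hpd S hS hS0

end SkewInvariant

end QuadraticMap

namespace Matrix

variable {R : Type*} [CommRing R] {n : ℕ}

/-- The paper's `Ĝ`; `lastColumn d` below is its `d ⊗ f₃`. -/
def padZero : Matrix (Fin n) (Fin n) R →ₗ[R] Matrix (Fin (n + 1)) (Fin (n + 1)) R where
  toFun G := of fun i j =>
    if hi : (i : ℕ) < n then (if hj : (j : ℕ) < n then G ⟨i, hi⟩ ⟨j, hj⟩ else 0) else 0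
  map_add' G H := by ext i j; dsimp only [of_apply, add_apply]; split_ifs <;> simp
  map_smul' c G := by ext i j; dsimp only [of_apply, smul_apply]; split_ifs <;> simp

def lastColumn : (Fin (n + 1) → R) →ₗ[R] Matrix (Fin (n + 1)) (Fin (n + 1)) R where
  toFun d := of fun i j => if j = Fin.last n then d i else 0
  map_add' d e := by ext i j; dsimp only [of_apply, add_apply, Pi.add_apply]; split_ifs <;> simp
  map_smul' c d := by ext i j; dsimp only [of_apply, smul_apply, Pi.smul_apply]; split_ifs <;> simp

@[simp]
theorem padZero_apply_castSucc (G : Matrix (Fin n) (Fin n) R) (i j : Fin n) :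
    padZero G i.castSucc j.castSucc = G i j := by
  simp [padZero]

@[simp]
theorem padZero_apply_last_left (G : Matrix (Fin n) (Fin n) R) (j : Fin (n + 1)) :
    padZero G (Fin.last n) j = 0 := by
  simp [padZero]

@[simp]
theorem padZero_apply_last_right (G : Matrix (Fin n) (Fin n) R) (i : Fin (n + 1)) :
    padZero G i (Fin.last n) = 0 := by
  simp [padZero]

@[simp]
theorem lastColumn_apply_castSucc (d : Fin (n + 1) → R) (i : Fin (n + 1)) (j : Fin n) :
    lastColumn d i j.castSucc = 0 := by
  simp [lastColumn, Fin.castSucc_ne_last]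

@[simp]
theorem lastColumn_apply_last (d : Fin (n + 1) → R) (i : Fin (n + 1)) :
    lastColumn d i (Fin.last n) = d i := by
  simp [lastColumn]

theorem transpose_padZero (G : Matrix (Fin n) (Fin n) R) : (padZero G)ᵀ = padZero Gᵀ := by
  ext i j
  induction i using Fin.lastCases <;> induction j using Fin.lastCases <;> simp

theorem submatrix_padZero_add_lastColumn (G : Matrix (Fin n) (Fin n) R) (d : Fin (n + 1) → R) :
    (padZero G + lastColumn d).submatrix Fin.castSucc Fin.castSucc = G := by
  ext i j
  simp

theorem transpose_eq_neg_of_padZero_add_lastColumn {G : Matrix (Fin n) (Fin n) R}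
    {d : Fin (n + 1) → R} (h : (padZero G + lastColumn d)ᵀ = -(padZero G + lastColumn d)) :
    Gᵀ = -G := by
  rw [← submatrix_padZero_add_lastColumn G d, transpose_submatrix, h]
  rfl

theorem exists_sub_padZero_add_lastColumn_transpose_eq_neg
    (F : Matrix (Fin (n + 1)) (Fin (n + 1)) R) : ∃ d : Fin (n + 1) → R,
      (F - (padZero (F.submatrix Fin.castSucc Fin.castSucc) + lastColumn d))ᵀ =
        -(F - (padZero (F.submatrix Fin.castSucc Fin.castSucc) + lastColumn d)) := by
  refine ⟨Fin.lastCases (F (Fin.last n) (Fin.last n))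
    (fun i => F i.castSucc (Fin.last n) + F (Fin.last n) i.castSucc), ?_⟩
  ext i j
  induction i using Fin.lastCases <;> induction j using Fin.lastCases <;> simp

theorem eq_zero_of_lastColumn_transpose_eq_neg [NoZeroDivisors R] [CharZero R]
    {d : Fin (n + 1) → R} (h : (lastColumn d)ᵀ = -lastColumn d) : d = 0 := by
  ext i
  have hi := congrFun (congrFun h (Fin.last n)) i
  simp only [transpose_apply, neg_apply, lastColumn_apply_last] at hi
  induction i using Fin.lastCases with
  | last => exact CharZero.eq_neg_self_iff.mp (by simpa using hi)
  | cast i => simpa using hi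

end Matrix

open Matrix QuadraticMap

theorem QuadraticMap.posDef_comp_lastColumn {n : ℕ}
    {Q : QuadraticForm ℝ (Matrix (Fin (n + 1)) (Fin (n + 1)) ℝ)} (hQ : ∀ X, 0 ≤ Q X)
    (hpd : ∀ X : Matrix (Fin (n + 1)) (Fin (n + 1)) ℝ, Xᵀ = X → X ≠ 0 → 0 < Q X)
    (hskew : ∀ X : Matrix (Fin (n + 1)) (Fin (n + 1)) ℝ, Xᵀ = -X → Q X = 0) :
    (Q.comp lastColumn).PosDef := fun _ hd =>
  pos_of_transpose_ne_neg hQ hskew hpd fun h => hd (eq_zero_of_lastColumn_transpose_eq_neg h)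

/-- the relaxed form `Q₂(G) = min_{d∈ℝ³} Q₃(Ĝ + d⊗f₃)` of a quadratic
form `Q₃` (psd, positive definite on Sym(3), vanishing on Skew(3)) is again a
quadratic form, psd, positive definite on Sym(2), vanishing on Skew(2), and
`Q₃(F) ≥ Q₂(F̌)` for all `F`. -/
theorem stmt18 (Q3 : QuadraticForm ℝ (Matrix (Fin 3) (Fin 3) ℝ))
    (hpsd : ∀ F, 0 ≤ Q3 F)
    (hpd : ∀ F : Matrix (Fin 3) (Fin 3) ℝ, Fᵀ = F → F ≠ 0 → 0 < Q3 F)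
    (hskew : ∀ F : Matrix (Fin 3) (Fin 3) ℝ, Fᵀ = -F → Q3 F = 0)
    (hat : Matrix (Fin 2) (Fin 2) ℝ → Matrix (Fin 3) (Fin 3) ℝ)
    (hhat : ∀ G (i j : Fin 3), hat G i j =
      if hi : (i : ℕ) < 2 then (if hj : (j : ℕ) < 2 then G ⟨i, hi⟩ ⟨j, hj⟩ else 0) else 0)
    (check : Matrix (Fin 3) (Fin 3) ℝ → Matrix (Fin 2) (Fin 2) ℝ)
    (hcheck : ∀ F (i j : Fin 2), check F i j = F (Fin.castSucc i) (Fin.castSucc j)) :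
    ∃ Q2 : QuadraticForm ℝ (Matrix (Fin 2) (Fin 2) ℝ),
      (∀ G, IsLeast
        {v : ℝ | ∃ d : Fin 3 → ℝ, v = Q3 (hat G + Matrix.of fun i j => if j = 2 then d i else 0)}
        (Q2 G)) ∧
      (∀ G, 0 ≤ Q2 G) ∧
      (∀ G : Matrix (Fin 2) (Fin 2) ℝ, Gᵀ = G → G ≠ 0 → 0 < Q2 G) ∧
      (∀ G : Matrix (Fin 2) (Fin 2) ℝ, Gᵀ = -G → Q2 G = 0) ∧
      (∀ F, Q2 (check F) ≤ Q3 F) := by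
  obtain rfl : hat = padZero := funext fun G => ext (hhat G)
  obtain rfl : check = fun F => F.submatrix Fin.castSucc Fin.castSucc :=
    funext fun F => ext (hcheck F)
  have hL := posDef_comp_lastColumn hpsd hpd hskew
  set Q2 := (minAlong Q3 lastColumn hL).comp padZero
  have hleast (G) : IsLeast {v | ∃ d, v = Q3 (padZero G + lastColumn d)} (Q2 G) := by
    show IsLeast _ (minAlong Q3 lastColumn hL (padZero G))
    simpa only [Set.range, eq_comm] using isLeast_minAlong Q3 lastColumn hL (padZero G)
  have hle (G d) : Q2 G ≤ Q3 (padZero G + lastColumn d) := (hleast G).2 ⟨d, rfl⟩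
  refine ⟨Q2, hleast, fun G => hpsd _, ?_, ?_, ?_⟩
  · intro G hG hG0
    refine pos_of_transpose_ne_neg hpsd hskew hpd fun h => hG0 ?_
    have hGG : G = -G := hG.symm.trans (transpose_eq_neg_of_padZero_add_lastColumn h)
    ext i j
    have hij : G i j = -G i j := congr_fun₂ hGG i j
    rw [Matrix.zero_apply]
    linarith
  · intro G hG
    refine le_antisymm ?_ (hpsd _)
    simpa [hskew _ (by rw [transpose_padZero, hG, map_neg])] using hle G 0
  · intro F
    obtain ⟨d, hd⟩ := exists_sub_padZero_add_lastColumn_transpose_eq_neg F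
    calc Q2 (F.submatrix Fin.castSucc Fin.castSucc)
        ≤ Q3 (padZero (F.submatrix Fin.castSucc Fin.castSucc) + lastColumn d) := hle _ d
      _ = Q3 F := by rw [← map_add_of_transpose_eq_neg hpsd hskew _ hd, add_sub_cancel]
end
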